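/- arXiv:2405.09149 — 7 statements merged into one kernel-verified Lean document; each statement's English description precedes it below -/
import Mathlib

section
/- Let κ > 0, μ ∈ ℝ, ν ∈ (0, 1), and let h₂(θ) = e^{κ cos(θ − μ)} (1 + ν cos θ) / (2π (I₀(κ) + ν cos μ · I₁(κ))). Then for every integer p, the p-th trigonometric moment satisfies ∫₀^{2π} e^{i p θ} h₂(θ) dθ = ( ν I_{p−1}(κ) e^{i(p−1)μ} + 2 I_p(κ) e^{i p μ} + ν I_{p+1}(κ) e^{i(p+1)μ} ) / ( 2 ( I₀(κ) + ν cos μ · I₁(κ) ) ). -/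
open Real

/-- The modified Bessel function of the first kind of integer order `p`,
defined by `I_p(κ) = (1/(2π)) ∫₀^{2π} e^{κ cos θ} cos(pθ) dθ`. -/
noncomputable def besselI (p : ℤ) (κ : ℝ) : ℝ :=
  (1 / (2 * π)) * ∫ θ in (0:ℝ)..(2 * π), Real.exp (κ * Real.cos θ) * Real.cos (p * θ)

/-- The marginal density of the vertical angle of the von Mises distribution
on the curved torus with radius ratio `ν`. -/
noncomputable def h₂ (κ μ ν : ℝ) (θ : ℝ) : ℝ :=
  Real.exp (κ * Real.cos (θ - μ)) * (1 + ν * Real.cos θ)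
    / (2 * π * (besselI 0 κ + ν * Real.cos μ * besselI 1 κ))

/-!
Writing `cos θ = (e^{iθ} + e^{-iθ}) / 2` turns the `p`-th moment of `h₂` into a combination
of the moments of orders `p - 1`, `p`, `p + 1` of `e^{κ cos(θ - μ)}`. By `2π`-periodicity,
shifting by `μ` multiplies the `q`-th moment by `e^{iqμ}`, and the moment of `e^{κ cos θ}` is
`2π I_q(κ)`: its imaginary part vanishes because `θ ↦ 2π - θ` fixes `cos θ` and negates
`sin (qθ)`.
-/

section

open Complex

lemma cexp_int_mul_mul_cos (p : ℤ) (θ : ℝ) :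
    cexp (I * p * θ) * Real.cos θ
      = (cexp (I * (p + 1 : ℤ) * θ) + cexp (I * (p - 1 : ℤ) * θ)) / 2 := by
  have hsucc : I * (p + 1 : ℤ) * θ = I * p * θ + θ * I := by push_cast; ring
  have hpred : I * (p - 1 : ℤ) * θ = I * p * θ + -θ * I := by push_cast; ring
  rw [hsucc, hpred, Complex.exp_add, Complex.exp_add, Complex.ofReal_cos, Complex.cos]
  ring

lemma intervalIntegral_cexp_int_mul_mul_one_add_mul_cos {f : ℝ → ℂ} {a b : ℝ}
    (hf : IntervalIntegrable f MeasureTheory.volume a b) (p : ℤ) (ν : ℂ) :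
    ∫ θ in a..b, cexp (I * p * θ) * (f θ * (1 + ν * Real.cos θ))
      = (∫ θ in a..b, cexp (I * p * θ) * f θ)
        + ν / 2 * ((∫ θ in a..b, cexp (I * (p + 1 : ℤ) * θ) * f θ)
          + ∫ θ in a..b, cexp (I * (p - 1 : ℤ) * θ) * f θ) := by
  have hint : ∀ q : ℤ, IntervalIntegrable (fun θ : ℝ => cexp (I * q * θ) * f θ)
      MeasureTheory.volume a b := fun q =>
    hf.continuousOn_mul (by fun_prop)
  have hpoint : ∀ θ : ℝ, cexp (I * p * θ) * (f θ * (1 + ν * Real.cos θ))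
      = cexp (I * p * θ) * f θ + ν / 2 * (cexp (I * (p + 1 : ℤ) * θ) * f θ
          + cexp (I * (p - 1 : ℤ) * θ) * f θ) := by
    intro θ
    linear_combination ν * f θ * cexp_int_mul_mul_cos p θ
  simp only [hpoint]
  rw [intervalIntegral.integral_add (hint p) (((hint _).add (hint _)).const_mul _),
    intervalIntegral.integral_const_mul, intervalIntegral.integral_add (hint _) (hint _)]

lemma intervalIntegral_comp_cos_mul_sin_int_mul_eq_zero (g : ℝ → ℝ) (p : ℤ) :
    ∫ θ in (0:ℝ)..(2 * π), g (Real.cos θ) * Real.sin (p * θ) = 0 := by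
  have hreflect := intervalIntegral.integral_comp_sub_left
    (fun θ => g (Real.cos θ) * Real.sin (p * θ)) (a := 0) (b := 2 * π) (2 * π)
  have hodd : ∀ θ : ℝ, g (Real.cos (2 * π - θ)) * Real.sin (p * (2 * π - θ))
      = -(g (Real.cos θ) * Real.sin (p * θ)) := by
    intro θ
    rw [Real.cos_two_pi_sub, mul_sub, ← neg_sub, Real.sin_neg, Real.sin_sub_int_mul_two_pi]
    ring
  simp only [hodd, intervalIntegral.integral_neg, sub_self, sub_zero] at hreflect
  linarith

lemma intervalIntegral_cexp_int_mul_mul_exp_cos (p : ℤ) (κ : ℝ) :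
    ∫ θ in (0:ℝ)..(2 * π), cexp (I * p * θ) * (Real.exp (κ * Real.cos θ) : ℂ)
      = 2 * π * besselI p κ := by
  have hsplit : ∀ θ : ℝ, cexp (I * p * θ) * (Real.exp (κ * Real.cos θ) : ℂ)
      = ((Real.exp (κ * Real.cos θ) * Real.cos (p * θ) : ℝ) : ℂ)
        + I * ((Real.exp (κ * Real.cos θ) * Real.sin (p * θ) : ℝ) : ℂ) := by
    intro θ
    rw [show I * p * θ = ((p * θ : ℝ) : ℂ) * I by push_cast; ring, Complex.exp_mul_I]
    push_cast
    ring
  have hsin := intervalIntegral_comp_cos_mul_sin_int_mul_eq_zero (fun c => Real.exp (κ * c)) p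
  simp only [hsplit]
  rw [intervalIntegral.integral_add (by apply Continuous.intervalIntegrable; fun_prop)
      (by apply Continuous.intervalIntegrable; fun_prop),
    intervalIntegral.integral_const_mul, intervalIntegral.integral_ofReal,
    intervalIntegral.integral_ofReal, hsin, besselI]
  have hπ : (π : ℂ) ≠ 0 := by exact_mod_cast Real.pi_ne_zero
  push_cast
  field_simp
  ring

lemma Function.Periodic.intervalIntegral_cexp_int_mul_mul_comp_sub {f : ℝ → ℂ}
    (hf : Function.Periodic f (2 * π)) (p : ℤ) (μ : ℝ) :
    ∫ θ in (0:ℝ)..(2 * π), cexp (I * p * θ) * f (θ - μ)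
      = cexp (I * p * μ) * ∫ θ in (0:ℝ)..(2 * π), cexp (I * p * θ) * f θ := by
  set F : ℝ → ℂ := fun θ => cexp (I * p * θ) * f θ
  have hF : Function.Periodic F (2 * π) := by
    intro θ
    simp only [F, hf θ]
    rw [show I * p * ((θ + 2 * π : ℝ) : ℂ) = I * p * θ + p * (2 * π * I) by push_cast; ring,
      Complex.exp_add, Complex.exp_int_mul_two_pi_mul_I, mul_one]
  have hfactor : ∀ θ : ℝ,
      cexp (I * p * θ) * f (θ - μ) = cexp (I * p * μ) * F (θ - μ) := by
    intro θ
    simp only [F]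
    rw [← mul_assoc, ← Complex.exp_add]
    push_cast
    ring_nf
  simp only [hfactor]
  rw [intervalIntegral.integral_const_mul, intervalIntegral.integral_comp_sub_right,
    zero_sub, sub_eq_neg_add, hF.intervalIntegral_add_eq (-μ) 0, zero_add]

end

theorem stmt6_general (κ μ ν : ℝ) (p : ℤ) :
    (∫ θ in (0:ℝ)..(2 * π), Complex.exp (Complex.I * p * θ) * (h₂ κ μ ν θ : ℂ))
      = ((ν : ℂ) * (besselI (p - 1) κ : ℂ) * Complex.exp (Complex.I * (p - 1) * μ)
          + 2 * (besselI p κ : ℂ) * Complex.exp (Complex.I * p * μ)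
          + (ν : ℂ) * (besselI (p + 1) κ : ℂ) * Complex.exp (Complex.I * (p + 1) * μ))
        / (2 * ((besselI 0 κ : ℂ) + (ν : ℂ) * Real.cos μ * (besselI 1 κ : ℂ))) := by
  set f : ℝ → ℂ := fun θ => (Real.exp (κ * Real.cos θ) : ℂ)
  set Z : ℂ := besselI 0 κ + ν * Real.cos μ * besselI 1 κ
  have hf : Function.Periodic f (2 * π) := fun θ => by simp only [f, Real.cos_add_two_pi]
  have hmoment : ∀ q : ℤ,
      ∫ θ in (0:ℝ)..(2 * π), Complex.exp (Complex.I * q * θ) * f (θ - μ)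
        = Complex.exp (Complex.I * q * μ) * (2 * π * besselI q κ) := fun q => by
    rw [hf.intervalIntegral_cexp_int_mul_mul_comp_sub, intervalIntegral_cexp_int_mul_mul_exp_cos]
  have hdensity : ∀ θ : ℝ, Complex.exp (Complex.I * p * θ) * (h₂ κ μ ν θ : ℂ)
      = (2 * π * Z)⁻¹
        * (Complex.exp (Complex.I * p * θ) * (f (θ - μ) * (1 + ν * Real.cos θ))) := by
    intro θ
    simp only [h₂, f, Z]
    push_cast
    ring
  simp only [hdensity]
  rw [intervalIntegral.integral_const_mul, intervalIntegral_cexp_int_mul_mul_one_add_mul_cos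
    (by apply Continuous.intervalIntegrable; fun_prop), hmoment, hmoment, hmoment]
  have hπ : (π : ℂ) ≠ 0 := by exact_mod_cast Real.pi_ne_zero
  -- `Z⁻¹` is kept as an atom, so the junk case `Z = 0` needs no separate treatment.
  rw [mul_inv, mul_inv, div_eq_mul_inv _ (2 * Z), mul_inv]
  push_cast
  field_simp
  ring

theorem stmt6 (κ μ ν : ℝ) (hκ : 0 < κ) (hν : ν ∈ Set.Ioo (0:ℝ) 1) (p : ℤ) :
    (∫ θ in (0:ℝ)..(2 * π), Complex.exp (Complex.I * p * θ) * (h₂ κ μ ν θ : ℂ))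
      = ((ν : ℂ) * (besselI (p - 1) κ : ℂ) * Complex.exp (Complex.I * (p - 1) * μ)
          + 2 * (besselI p κ : ℂ) * Complex.exp (Complex.I * p * μ)
          + (ν : ℂ) * (besselI (p + 1) κ : ℂ) * Complex.exp (Complex.I * (p + 1) * μ))
        / (2 * ((besselI 0 κ : ℂ) + (ν : ℂ) * Real.cos μ * (besselI 1 κ : ℂ))) :=
  stmt6_general κ μ ν p
end

section
/- Let κ > 0, ν ∈ (0, 1), and μ ∈ ℝ with sin μ ≠ 0, and let h₂ : ℝ → ℝ be the 2π-periodic function h₂(θ) = e^{κ cos(θ − μ)} (1 + ν cos θ) / (2π (I₀(κ) + ν cos μ · I₁(κ))). Then h₂ is not symmetric about any axis: there is no v ∈ ℝ such that h₂(v + θ) = h₂(v − θ) for all θ ∈ ℝ. -/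
open Real

/-- The normalizing constant is positive. -/
lemma besselI_denom_pos (κ μ ν : ℝ) (hν : ν ∈ Set.Ioo (0:ℝ) 1) :
    0 < besselI 0 κ + ν * Real.cos μ * besselI 1 κ := by
  have hπ : (0:ℝ) < π := Real.pi_pos
  have hint1 : IntervalIntegrable (fun θ => Real.exp (κ * Real.cos θ))
      MeasureTheory.volume 0 (2*π) :=
    Continuous.intervalIntegrable (by continuity) _ _
  have hint2 : IntervalIntegrable (fun θ => Real.exp (κ * Real.cos θ) * Real.cos θ)
      MeasureTheory.volume 0 (2*π) :=
    Continuous.intervalIntegrable (by continuity) _ _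
  have h0 : besselI 0 κ = (1 / (2*π)) * ∫ θ in (0:ℝ)..(2*π), Real.exp (κ * Real.cos θ) := by
    unfold besselI; congr 1; apply intervalIntegral.integral_congr; intro x _; simp
  have h1 : besselI 1 κ
      = (1 / (2*π)) * ∫ θ in (0:ℝ)..(2*π), Real.exp (κ * Real.cos θ) * Real.cos θ := by
    unfold besselI; congr 1; apply intervalIntegral.integral_congr; intro x _; norm_num
  have hcomb : besselI 0 κ + ν * Real.cos μ * besselI 1 κ
      = (1 / (2*π)) * ∫ θ in (0:ℝ)..(2*π),
          Real.exp (κ * Real.cos θ) * (1 + ν * Real.cos μ * Real.cos θ) := by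
    rw [h0, h1]
    rw [show (fun θ => Real.exp (κ * Real.cos θ) * (1 + ν * Real.cos μ * Real.cos θ))
        = (fun θ => Real.exp (κ * Real.cos θ)
            + ν * Real.cos μ * (Real.exp (κ * Real.cos θ) * Real.cos θ)) from by
      funext θ; ring]
    rw [intervalIntegral.integral_add hint1 (hint2.const_mul _),
      intervalIntegral.integral_const_mul]
    ring
  rw [hcomb]
  apply mul_pos (by positivity)
  apply intervalIntegral.intervalIntegral_pos_of_pos_on
  · exact Continuous.intervalIntegrable (by continuity) _ _
  · intro x _
    have hbd : |Real.cos μ * Real.cos x| ≤ 1 := by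
      rw [abs_mul]
      exact mul_le_one₀ (Real.abs_cos_le_one μ) (abs_nonneg _) (Real.abs_cos_le_one x)
    have := abs_le.mp hbd
    have hexp : 0 < Real.exp (κ * Real.cos x) := Real.exp_pos _
    have : 0 < 1 + ν * Real.cos μ * Real.cos x := by nlinarith [hν.1, hν.2]
    positivity
  · linarith

/-- If the (positive-multiple-of-the-density) numerators agree symmetrically about `v`,
we obtain a contradiction. -/
lemma no_axis_aux (κ μ ν v : ℝ) (hκ : 0 < κ) (hν : ν ∈ Set.Ioo (0:ℝ) 1)
    (hμ : Real.sin μ ≠ 0)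
    (hnum : ∀ θ : ℝ,
      Real.exp (κ * Real.cos (v + θ - μ)) * (1 + ν * Real.cos (v + θ))
        = Real.exp (κ * Real.cos (v - θ - μ)) * (1 + ν * Real.cos (v - θ))) : False := by
  -- key identity
  have key : ∀ θ : ℝ,
      Real.exp (-(κ * Real.sin (v-μ) * Real.sin θ)) *
          (1 + ν * (Real.cos v * Real.cos θ - Real.sin v * Real.sin θ))
        = Real.exp (κ * Real.sin (v-μ) * Real.sin θ) *
          (1 + ν * (Real.cos v * Real.cos θ + Real.sin v * Real.sin θ)) := by
    intro θ
    have h := hnum θ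
    have hA : Real.exp (κ * Real.cos (v + θ - μ))
        = Real.exp (κ * (Real.cos (v-μ) * Real.cos θ)) *
          Real.exp (-(κ * Real.sin (v-μ) * Real.sin θ)) := by
      rw [← Real.exp_add]; congr 1
      rw [show v + θ - μ = (v-μ) + θ by ring, Real.cos_add]; ring
    have hB : Real.exp (κ * Real.cos (v - θ - μ))
        = Real.exp (κ * (Real.cos (v-μ) * Real.cos θ)) *
          Real.exp (κ * Real.sin (v-μ) * Real.sin θ) := by
      rw [← Real.exp_add]; congr 1
      rw [show v - θ - μ = (v-μ) - θ by ring, Real.cos_sub]; ring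
    have hP1 : (1 : ℝ) + ν * Real.cos (v + θ)
        = 1 + ν * (Real.cos v * Real.cos θ - Real.sin v * Real.sin θ) := by
      rw [Real.cos_add]
    have hP2 : (1 : ℝ) + ν * Real.cos (v - θ)
        = 1 + ν * (Real.cos v * Real.cos θ + Real.sin v * Real.sin θ) := by
      rw [Real.cos_sub]
    rw [hA, hB, hP1, hP2] at h
    have h' : Real.exp (κ * (Real.cos (v-μ) * Real.cos θ)) *
        (Real.exp (-(κ * Real.sin (v-μ) * Real.sin θ)) *
          (1 + ν * (Real.cos v * Real.cos θ - Real.sin v * Real.sin θ)))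
        = Real.exp (κ * (Real.cos (v-μ) * Real.cos θ)) *
        (Real.exp (κ * Real.sin (v-μ) * Real.sin θ) *
          (1 + ν * (Real.cos v * Real.cos θ + Real.sin v * Real.sin θ))) := by
      linear_combination h
    exact mul_left_cancel₀ (Real.exp_ne_zero _) h'
  -- dichotomy: cos v = 0 ∨ sin (v-μ) = 0
  have dich : Real.cos v = 0 ∨ Real.sin (v - μ) = 0 := by
    by_contra hcon
    push_neg at hcon
    obtain ⟨hC0, hs0⟩ := hcon
    have h1 := key (π/4)
    have h2 := key (π - π/4)
    rw [Real.sin_pi_sub, Real.cos_pi_sub] at h2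
    have hsub : ν * Real.cos v * Real.cos (π/4) *
        (Real.exp (-(κ * Real.sin (v-μ) * Real.sin (π/4)))
          - Real.exp (κ * Real.sin (v-μ) * Real.sin (π/4))) = 0 := by
      linear_combination (h1 - h2) / 2
    have hc4 : Real.cos (π/4) ≠ 0 := by
      rw [Real.cos_pi_div_four]; positivity
    have hfac : Real.exp (-(κ * Real.sin (v-μ) * Real.sin (π/4)))
        - Real.exp (κ * Real.sin (v-μ) * Real.sin (π/4)) = 0 := by
      rcases mul_eq_zero.mp hsub with h | h
      · rcases mul_eq_zero.mp h with h | h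
        · rcases mul_eq_zero.mp h with h | h
          · exact absurd h (ne_of_gt hν.1)
          · exact absurd h hC0
        · exact absurd h hc4
      · exact h
    have heq : -(κ * Real.sin (v-μ) * Real.sin (π/4)) = κ * Real.sin (v-μ) * Real.sin (π/4) :=
      Real.exp_eq_exp.mp (by linarith)
    have hsin4 : Real.sin (π/4) ≠ 0 := by rw [Real.sin_pi_div_four]; positivity
    have hz : κ * Real.sin (v-μ) * Real.sin (π/4) = 0 := by linarith
    rcases mul_eq_zero.mp hz with h | h
    · rcases mul_eq_zero.mp h with h | h
      · exact absurd h (ne_of_gt hκ)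
      · exact hs0 h
    · exact hsin4 h
  have hpyth : Real.sin v ^ 2 + Real.cos v ^ 2 = 1 := Real.sin_sq_add_cos_sq v
  rcases dich with hC0 | hs0
  · -- cos v = 0 case
    have hSsq : Real.sin v ^ 2 = 1 := by rw [hC0] at hpyth; linarith
    have key' : ∀ θ : ℝ,
        Real.exp (-(κ * Real.sin (v-μ) * Real.sin θ)) * (1 - ν * Real.sin v * Real.sin θ)
          = Real.exp (κ * Real.sin (v-μ) * Real.sin θ)
              * (1 + ν * Real.sin v * Real.sin θ) := by
      intro θ
      have h := key θ
      rw [hC0] at h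
      linear_combination h
    have h1 := key' (π/2)
    rw [Real.sin_pi_div_two] at h1
    simp only [mul_one] at h1
    have h2 := key' (π/6)
    rw [Real.sin_pi_div_six] at h2
    -- turn into polynomial identities
    have e1 : 1 - ν * Real.sin v
        = Real.exp (κ * Real.sin (v-μ)) *
          (Real.exp (κ * Real.sin (v-μ)) * (1 + ν * Real.sin v)) := by
      rw [Real.exp_neg, inv_mul_eq_iff_eq_mul₀ (Real.exp_ne_zero _)] at h1
      linarith [h1]
    have e2 : 1 - ν * Real.sin v * (1/2)
        = Real.exp (κ * Real.sin (v-μ) * (1/2)) *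
          (Real.exp (κ * Real.sin (v-μ) * (1/2)) * (1 + ν * Real.sin v * (1/2))) := by
      rw [Real.exp_neg, inv_mul_eq_iff_eq_mul₀ (Real.exp_ne_zero _)] at h2
      linarith [h2]
    set Q := Real.exp (κ * Real.sin (v-μ) * (1/2)) with hQdef
    have hG : Real.exp (κ * Real.sin (v-μ)) = Q^2 := by
      rw [hQdef, pow_two, ← Real.exp_add]; congr 1; ring
    set w := ν * Real.sin v with hwdef
    have ea : 1 - w = Q^2 * Q^2 * (1 + w) := by rw [← hG]; linear_combination e1
    have eb : Q^2 * (2 + w) = 2 - w := by linear_combination -2 * e2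
    have key3 : (1 - w) * (2 + w)^2 = (2 - w)^2 * (1 + w) := by
      calc (1 - w) * (2 + w)^2 = (Q^2 * Q^2 * (1 + w)) * (2 + w)^2 := by rw [ea]
        _ = (Q^2 * (2 + w))^2 * (1 + w) := by ring
        _ = (2 - w)^2 * (1 + w) := by rw [eb]
    have hw3 : w^3 = 0 := by linear_combination (-1/2 : ℝ) * key3
    have hw0 : w = 0 := pow_eq_zero_iff (three_ne_zero) |>.mp hw3
    rw [hwdef] at hw0
    rcases mul_eq_zero.mp hw0 with h | h
    · exact absurd h (ne_of_gt hν.1)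
    · rw [h] at hSsq; norm_num at hSsq
  · -- sin (v-μ) = 0 case
    have h1 := key (π/2)
    rw [show κ * Real.sin (v-μ) * Real.sin (π/2) = 0 by rw [hs0]; ring,
      neg_zero, Real.exp_zero, Real.cos_pi_div_two, Real.sin_pi_div_two] at h1
    have hνS : ν * Real.sin v = 0 := by linear_combination -h1 / 2
    have hS0 : Real.sin v = 0 := by
      rcases mul_eq_zero.mp hνS with h | h
      · exact absurd h (ne_of_gt hν.1)
      · exact h
    have hC1 : Real.cos v ^ 2 = 1 := by rw [hS0] at hpyth; linarith
    have hsub : Real.sin (v - μ) = Real.sin v * Real.cos μ - Real.cos v * Real.sin μ :=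
      Real.sin_sub v μ
    rw [hs0, hS0] at hsub
    have hCsin : Real.cos v * Real.sin μ = 0 := by linarith
    rcases mul_eq_zero.mp hCsin with h | h
    · rw [h] at hC1; norm_num at hC1
    · exact hμ h

theorem stmt9 (κ μ ν : ℝ) (hκ : 0 < κ) (hν : ν ∈ Set.Ioo (0:ℝ) 1)
    (hμ : Real.sin μ ≠ 0) :
    ¬ ∃ v : ℝ, ∀ θ : ℝ, h₂ κ μ ν (v + θ) = h₂ κ μ ν (v - θ) := by
  rintro ⟨v, hsym⟩
  have hD := besselI_denom_pos κ μ ν hν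
  have hden : 2 * π * (besselI 0 κ + ν * Real.cos μ * besselI 1 κ) ≠ 0 := by
    have := Real.pi_pos
    positivity
  apply no_axis_aux κ μ ν v hκ hν hμ
  intro θ
  have h := hsym θ
  unfold h₂ at h
  rw [div_eq_div_iff hden hden] at h
  exact mul_right_cancel₀ hden h
end

section
/- Let κ > 0, μ ∈ ℝ, ν ∈ (0, 1). Let f_c(θ) = (1 + ν cos θ)/(2π) be the cardioid density and h₂(θ) = e^{κ cos(θ − μ)} (1 + ν cos θ) / (2π (I₀(κ) + ν cos μ · I₁(κ))). Then the Kullback–Leibler divergence satisfies ∫₀^{2π} f_c(θ) · log( f_c(θ) / h₂(θ) ) dθ = log( I₀(κ) + ν cos μ · I₁(κ) ) − (ν κ cos μ)/2. -/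
open Real

/-- The cardioid density with parameter `ν` and location `0`. -/
noncomputable def cardioid (ν : ℝ) (θ : ℝ) : ℝ := (1 + ν * Real.cos θ) / (2 * π)

lemma int_cos : ∫ θ in (0:ℝ)..(2 * π), Real.cos θ = 0 := by
  simp [integral_cos, Real.sin_two_pi]

lemma int_cos_shift (μ : ℝ) : ∫ θ in (0:ℝ)..(2 * π), Real.cos (θ - μ) = 0 := by
  rw [intervalIntegral.integral_comp_sub_right (fun x => Real.cos x) μ, integral_cos,
    Real.sin_sub, Real.sin_two_pi, Real.cos_two_pi]
  simp

lemma int_cos_mul_cos_shift (μ : ℝ) :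
    ∫ θ in (0:ℝ)..(2 * π), Real.cos θ * Real.cos (θ - μ) = π * Real.cos μ := by
  have h : ∀ θ : ℝ, Real.cos θ * Real.cos (θ - μ) =
      Real.cos μ * Real.cos θ ^ 2 + Real.sin μ * (Real.sin θ * Real.cos θ) := by
    intro θ
    rw [Real.cos_sub]; ring
  rw [intervalIntegral.integral_congr (g := fun θ => Real.cos μ * Real.cos θ ^ 2 +
      Real.sin μ * (Real.sin θ * Real.cos θ)) (fun θ _ => h θ)]
  rw [intervalIntegral.integral_add (Continuous.intervalIntegrable (by fun_prop) _ _)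
      (Continuous.intervalIntegrable (by fun_prop) _ _),
    intervalIntegral.integral_const_mul, intervalIntegral.integral_const_mul,
    integral_cos_sq, integral_sin_mul_cos₁]
  simp [Real.sin_two_pi, Real.cos_two_pi]
  ring

theorem stmt10 (κ μ ν : ℝ) (hκ : 0 < κ) (hν : ν ∈ Set.Ioo (0:ℝ) 1) :
    (∫ θ in (0:ℝ)..(2 * π), cardioid ν θ * Real.log (cardioid ν θ / h₂ κ μ ν θ))
      = Real.log (besselI 0 κ + ν * Real.cos μ * besselI 1 κ) - ν * κ * Real.cos μ / 2 := by
  obtain ⟨hν0, hν1⟩ := hν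
  set C : ℝ := besselI 0 κ + ν * Real.cos μ * besselI 1 κ with hC
  have hπ : (0:ℝ) < π := Real.pi_pos
  have h0 : besselI 0 κ = (1 / (2 * π)) * ∫ θ in (0:ℝ)..(2 * π), Real.exp (κ * Real.cos θ) := by
    unfold besselI
    congr 1
    apply intervalIntegral.integral_congr
    intro θ _
    norm_num
  have h1 : besselI 1 κ
      = (1 / (2 * π)) * ∫ θ in (0:ℝ)..(2 * π), Real.exp (κ * Real.cos θ) * Real.cos θ := by
    unfold besselI
    congr 1
    apply intervalIntegral.integral_congr
    intro θ _
    norm_num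
  have hC_eq : C = (1 / (2 * π)) *
      ∫ θ in (0:ℝ)..(2 * π), Real.exp (κ * Real.cos θ) * (1 + ν * Real.cos μ * Real.cos θ) := by
    have hsum : (∫ θ in (0:ℝ)..(2 * π),
        Real.exp (κ * Real.cos θ) * (1 + ν * Real.cos μ * Real.cos θ))
        = (∫ θ in (0:ℝ)..(2 * π), Real.exp (κ * Real.cos θ))
          + ν * Real.cos μ * ∫ θ in (0:ℝ)..(2 * π), Real.exp (κ * Real.cos θ) * Real.cos θ := by
      rw [← intervalIntegral.integral_const_mul,
        ← intervalIntegral.integral_add (Continuous.intervalIntegrable (by fun_prop) _ _)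
          (Continuous.intervalIntegrable (by fun_prop) _ _)]
      apply intervalIntegral.integral_congr
      intro θ _
      ring
    rw [hC, h0, h1, hsum]
    ring
  have hbound : ∀ θ : ℝ, 1 - ν ≤ 1 + ν * Real.cos μ * Real.cos θ := by
    intro θ
    nlinarith [mul_self_nonneg (Real.cos μ + Real.cos θ), Real.cos_sq_le_one μ,
      Real.cos_sq_le_one θ, hν0.le]
  have hCpos : 0 < C := by
    rw [hC_eq]
    apply mul_pos (by positivity)
    apply intervalIntegral.intervalIntegral_pos_of_pos_on
      (Continuous.intervalIntegrable (by fun_prop) _ _)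
    · intro θ _
      have h := hbound θ
      have h' : (0:ℝ) < 1 + ν * Real.cos μ * Real.cos θ := by linarith
      positivity
    · linarith
  have hcard : ∀ θ : ℝ, 0 < 1 + ν * Real.cos θ := by
    intro θ
    nlinarith [Real.neg_one_le_cos θ, Real.cos_le_one θ]
  have key : ∀ θ : ℝ, cardioid ν θ * Real.log (cardioid ν θ / h₂ κ μ ν θ)
      = cardioid ν θ * (Real.log C - κ * Real.cos (θ - μ)) := by
    intro θ
    congr 1
    have hc : 0 < cardioid ν θ := div_pos (hcard θ) (by positivity)
    have hh : 0 < h₂ κ μ ν θ := by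
      unfold h₂
      rw [← hC]
      exact div_pos (mul_pos (Real.exp_pos _) (hcard θ)) (by positivity)
    rw [Real.log_div hc.ne' hh.ne']
    unfold cardioid h₂
    rw [← hC, Real.log_div (hcard θ).ne' (by positivity),
      Real.log_div (mul_pos (Real.exp_pos _) (hcard θ)).ne' (by positivity),
      Real.log_mul (Real.exp_ne_zero _) (hcard θ).ne', Real.log_exp,
      Real.log_mul (by positivity) hCpos.ne']
    ring
  rw [intervalIntegral.integral_congr (fun θ _ => key θ)]
  have hint1 : (∫ θ in (0:ℝ)..(2 * π), cardioid ν θ) = 1 := by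
    unfold cardioid
    rw [intervalIntegral.integral_div,
      intervalIntegral.integral_add (intervalIntegrable_const)
        (Continuous.intervalIntegrable (by fun_prop) _ _),
      intervalIntegral.integral_const_mul, int_cos]
    simp
  have hint2 : (∫ θ in (0:ℝ)..(2 * π), cardioid ν θ * Real.cos (θ - μ))
      = ν * Real.cos μ / 2 := by
    unfold cardioid
    have heq : ∀ θ : ℝ, (1 + ν * Real.cos θ) / (2 * π) * Real.cos (θ - μ)
        = (Real.cos (θ - μ) + ν * (Real.cos θ * Real.cos (θ - μ))) / (2 * π) := by
      intro θ; field_simp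
    rw [intervalIntegral.integral_congr (fun θ _ => heq θ), intervalIntegral.integral_div,
      intervalIntegral.integral_add (Continuous.intervalIntegrable (by fun_prop) _ _)
        (Continuous.intervalIntegrable (by fun_prop) _ _),
      intervalIntegral.integral_const_mul, int_cos_shift, int_cos_mul_cos_shift]
    field_simp
    ring
  have hsplit : (∫ θ in (0:ℝ)..(2 * π), cardioid ν θ * (Real.log C - κ * Real.cos (θ - μ)))
      = Real.log C * (∫ θ in (0:ℝ)..(2 * π), cardioid ν θ)
        - κ * ∫ θ in (0:ℝ)..(2 * π), cardioid ν θ * Real.cos (θ - μ) := by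
    rw [← intervalIntegral.integral_const_mul, ← intervalIntegral.integral_const_mul,
      ← intervalIntegral.integral_sub
        (Continuous.intervalIntegrable (by unfold cardioid; fun_prop) _ _)
        (Continuous.intervalIntegrable (by unfold cardioid; fun_prop) _ _)]
    apply intervalIntegral.integral_congr
    intro θ _
    ring
  rw [hsplit, hint1, hint2]
  ring
end

section
/- Let κ > 0 and ν ∈ (0, 1), and define g(θ) = e^{−κ cos θ} (1 + ν cos θ) (the unnormalized toroidal marginal density with location parameter μ = π). If κ < ν/(1+ν) or κ > ν/(1−ν), then the derivative g′ vanishes at exactly two points of [0, 2π), namely θ = 0 and θ = π (unimodal case). If ν/(1+ν) < κ < ν/(1−ν), then g′ vanishes at exactly four points of [0, 2π), namely θ = 0, θ = π, and the two solutions in (0, 2π) \ {π} of cos θ = (ν − κ)/(κ ν) (bimodal case). -/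
/-!
Since `g' θ = e^{-κ cos θ} · sin θ · (κν cos θ + κ - ν)`, the critical points in `[0, 2π)` are
`0` and `π` (the zeros of `sin`) together with the solutions of `cos θ = c`, `c = (ν - κ)/(κν)`.
The thresholds are exactly where `c` crosses `±1`: `c > 1` iff `κ < ν/(1+ν)` and `c < -1` iff
`κ > ν/(1-ν)`, so then there are no further critical points, while for `c ∈ (-1, 1)` there are
exactly two, `arccos c` and `2π - arccos c`.
-/

open Real Set

lemma sin_eq_zero_iff_of_mem_Ico {θ : ℝ} (hθ : θ ∈ Ico 0 (2 * π)) :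
    sin θ = 0 ↔ θ = 0 ∨ θ = π := by
  rcases hθ.1.eq_or_lt with rfl | hθ₀
  · simp
  · rw [← neg_eq_zero, ← sin_sub_pi,
      sin_eq_zero_iff_of_lt_of_lt (by linarith) (by linarith [hθ.2]), sub_eq_zero]
    simp [hθ₀.ne']

lemma cos_eq_iff_of_mem_Ico {θ c : ℝ} (hθ : θ ∈ Ico 0 (2 * π)) (hc : c ∈ Icc (-1) 1) :
    cos θ = c ↔ θ = arccos c ∨ θ = 2 * π - arccos c := by
  constructor
  · rintro rfl
    rcases le_or_gt θ π with hπ | hπ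
    · exact .inl (arccos_cos hθ.1 hπ).symm
    · right
      rw [← cos_two_pi_sub, arccos_cos (by linarith [hθ.2]) (by linarith)]
      ring
  · rintro (rfl | rfl)
    · exact cos_arccos hc.1 hc.2
    · rw [cos_two_pi_sub, cos_arccos hc.1 hc.2]

lemma setOf_cos_eq_of_mem_Ioo {c : ℝ} (hc : c ∈ Ioo (-1) 1) :
    {θ ∈ Ico 0 (2 * π) | cos θ = c} = {arccos c, 2 * π - arccos c} := by
  have h₀ : 0 < arccos c := arccos_pos.2 hc.2
  have hπ : arccos c < π := arccos_lt_pi.2 hc.1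
  ext θ
  refine ⟨fun hθ ↦ (cos_eq_iff_of_mem_Ico hθ.1 (Ioo_subset_Icc_self hc)).1 hθ.2, fun hθ ↦ ?_⟩
  have hθ' : θ ∈ Ico 0 (2 * π) := by
    rcases hθ with rfl | rfl <;> constructor <;> linarith
  exact ⟨hθ', (cos_eq_iff_of_mem_Ico hθ' (Ioo_subset_Icc_self hc)).2 hθ⟩

lemma setOf_mem_Ioo_ne_pi_cos_eq {c : ℝ} (hc : c ∈ Ioo (-1) 1) :
    {θ ∈ Ioo 0 (2 * π) | θ ≠ π ∧ cos θ = c} = {θ ∈ Ico 0 (2 * π) | cos θ = c} := by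
  ext θ
  refine ⟨fun ⟨hθ, _, hcos⟩ ↦ ⟨Ioo_subset_Ico_self hθ, hcos⟩, fun ⟨hθ, hcos⟩ ↦ ?_⟩
  have hθ₀ : θ ≠ 0 := by rintro rfl; linarith [hc.2, cos_zero]
  have hθπ : θ ≠ π := by rintro rfl; linarith [hc.1, cos_pi]
  exact ⟨⟨hθ.1.lt_of_ne' hθ₀, hθ.2⟩, hθπ, hcos⟩

lemma hasDerivAt_exp_neg_mul_cos_mul (κ ν θ : ℝ) :
    HasDerivAt (fun θ ↦ exp (-κ * cos θ) * (1 + ν * cos θ))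
      (exp (-κ * cos θ) * (sin θ * (κ * ν * cos θ + κ - ν))) θ := by
  have hexp := ((hasDerivAt_cos θ).const_mul (-κ)).exp
  have hlin := ((hasDerivAt_cos θ).const_mul ν).const_add 1
  exact (hexp.mul hlin).congr_deriv (by ring)

lemma deriv_exp_neg_mul_cos_mul_eq_zero_iff {κ ν : ℝ} (hκν : κ * ν ≠ 0) (θ : ℝ) :
    deriv (fun θ ↦ exp (-κ * cos θ) * (1 + ν * cos θ)) θ = 0 ↔
      sin θ = 0 ∨ cos θ = (ν - κ) / (κ * ν) := by
  rw [(hasDerivAt_exp_neg_mul_cos_mul κ ν θ).deriv, mul_eq_zero, mul_eq_zero,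
    eq_div_iff hκν]
  simp only [exp_ne_zero, false_or]
  constructor <;> rintro (h | h) <;> first | exact .inl h | (right; linarith)

lemma setOf_deriv_exp_neg_mul_cos_mul_eq_zero {κ ν : ℝ} (hκν : κ * ν ≠ 0) :
    {θ ∈ Ico 0 (2 * π) | deriv (fun θ ↦ exp (-κ * cos θ) * (1 + ν * cos θ)) θ = 0} =
      {0, π} ∪ {θ ∈ Ico 0 (2 * π) | cos θ = (ν - κ) / (κ * ν)} := by
  ext θ
  simp only [mem_ofPred_eq, mem_union, deriv_exp_neg_mul_cos_mul_eq_zero_iff hκν]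
  constructor
  · rintro ⟨hθ, hsin | hcos⟩
    · exact .inl (sin_eq_zero_iff_of_mem_Ico hθ |>.1 hsin)
    · exact .inr ⟨hθ, hcos⟩
  · rintro (hθ | ⟨hθ, hcos⟩)
    · have hθ' : θ ∈ Ico 0 (2 * π) := by
        rcases hθ with rfl | rfl <;> constructor <;> linarith [pi_pos]
      exact ⟨hθ', .inl (sin_eq_zero_iff_of_mem_Ico hθ' |>.2 hθ)⟩
    · exact ⟨hθ, .inr hcos⟩

section Thresholds

variable {κ ν : ℝ}

lemma one_lt_div_iff_lt_div_one_add (hκ : 0 < κ) (hν : 0 < ν) :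
    1 < (ν - κ) / (κ * ν) ↔ κ < ν / (1 + ν) := by
  rw [lt_div_iff₀ (by positivity), lt_div_iff₀ (by positivity)]
  constructor <;> intro h <;> linarith

lemma div_lt_one_iff_div_one_add_lt (hκ : 0 < κ) (hν : 0 < ν) :
    (ν - κ) / (κ * ν) < 1 ↔ ν / (1 + ν) < κ := by
  rw [div_lt_iff₀ (by positivity), div_lt_iff₀ (by positivity)]
  constructor <;> intro h <;> linarith

lemma div_lt_neg_one_iff_div_one_sub_lt (hκ : 0 < κ) (hν : 0 < ν) (hν₁ : ν < 1) :
    (ν - κ) / (κ * ν) < -1 ↔ ν / (1 - ν) < κ := by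
  rw [div_lt_iff₀ (by positivity), div_lt_iff₀ (by linarith)]
  constructor <;> intro h <;> linarith

lemma neg_one_lt_div_iff_lt_div_one_sub (hκ : 0 < κ) (hν : 0 < ν) (hν₁ : ν < 1) :
    -1 < (ν - κ) / (κ * ν) ↔ κ < ν / (1 - ν) := by
  rw [lt_div_iff₀ (by positivity), lt_div_iff₀ (by linarith)]
  constructor <;> intro h <;> linarith

end Thresholds

theorem stmt15 (κ ν : ℝ) (hκ : 0 < κ) (hν : ν ∈ Set.Ioo (0:ℝ) 1) :
    -- the unnormalized toroidal marginal density with location parameter μ = π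
    let g : ℝ → ℝ := fun θ => Real.exp (-κ * Real.cos θ) * (1 + ν * Real.cos θ)
    -- unimodal case: exactly two critical points, namely 0 and π
    ((κ < ν / (1 + ν) ∨ ν / (1 - ν) < κ) →
      {θ ∈ Set.Ico (0:ℝ) (2 * π) | deriv g θ = 0} = {0, π}) ∧
    -- bimodal case: exactly four critical points, namely 0, π, and the two
    -- solutions in (0, 2π) \ {π} of cos θ = (ν − κ)/(κν)
    (ν / (1 + ν) < κ → κ < ν / (1 - ν) →
      ({θ ∈ Set.Ico (0:ℝ) (2 * π) | deriv g θ = 0}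
          = {0, π} ∪ {θ ∈ Set.Ioo (0:ℝ) (2 * π) | θ ≠ π ∧
              Real.cos θ = (ν - κ) / (κ * ν)} ∧
        ∃ θ₁ θ₂ : ℝ, θ₁ ≠ θ₂ ∧
          {θ ∈ Set.Ioo (0:ℝ) (2 * π) | θ ≠ π ∧ Real.cos θ = (ν - κ) / (κ * ν)}
            = {θ₁, θ₂})) := by
  obtain ⟨hν₀, hν₁⟩ := hν
  simp only [setOf_deriv_exp_neg_mul_cos_mul_eq_zero (by positivity : κ * ν ≠ 0)]
  refine ⟨fun hcase ↦ ?_, fun hlow hhigh ↦ ?_⟩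
  · have hcos : ∀ θ, cos θ ≠ (ν - κ) / (κ * ν) := by
      intro θ hθ
      rcases hcase with hlow | hhigh
      · linarith [cos_le_one θ, (one_lt_div_iff_lt_div_one_add hκ hν₀).2 hlow]
      · linarith [neg_one_le_cos θ, (div_lt_neg_one_iff_div_one_sub_lt hκ hν₀ hν₁).2 hhigh]
    simp [hcos]
  · have hc : (ν - κ) / (κ * ν) ∈ Ioo (-1) 1 :=
      ⟨(neg_one_lt_div_iff_lt_div_one_sub hκ hν₀ hν₁).2 hhigh,
        (div_lt_one_iff_div_one_add_lt hκ hν₀).2 hlow⟩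
    rw [setOf_mem_Ioo_ne_pi_cos_eq hc, setOf_cos_eq_of_mem_Ioo hc]
    refine ⟨rfl, _, _, fun h ↦ ?_, rfl⟩
    linarith [arccos_lt_pi.2 hc.1]
end

section
/- Let κ > 0, ν ∈ (0, 1), μ ∈ ℝ, and set b₁ = cos μ, b₂ = sin μ, b₃ = ν/κ, and d₄ = b₂(1−ν), d₃ = 2b₃ + 2b₁(1−ν), d₂ = 2b₂ν, d₁ = 2b₃ + 2b₁(1+ν), d₀ = −b₂(1+ν). Then for every θ ∈ (−π, π), writing x = tan(θ/2), the derivative of θ ↦ e^{κ cos(θ − μ)} (1 + ν cos θ) vanishes at θ if and only if d₄ x⁴ + d₃ x³ + d₂ x² + d₁ x + d₀ = 0. -/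
/-!
Differentiating gives `f'(θ) = -κ e^{κ cos(θ - μ)} G(θ)` with
`G(θ) = sin(θ - μ)(1 + ν cos θ) + (ν/κ) sin θ`, so the critical points are the zeros of `G`.
With `x = tan(θ/2)`, the half-angle formulas turn `(1 + x²)² G(θ)` into exactly the quartic with
coefficients `dᵢ`, and `1 + x² > 0`.
-/

open Real

theorem hasDerivAt_exp_mul_cos_sub_mul_one_add_mul_cos (κ ν μ θ : ℝ) :
    HasDerivAt (fun t : ℝ => exp (κ * cos (t - μ)) * (1 + ν * cos t))
      (-exp (κ * cos (θ - μ)) * (κ * sin (θ - μ) * (1 + ν * cos θ) + ν * sin θ)) θ := by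
  have hexp : HasDerivAt (fun t : ℝ => exp (κ * cos (t - μ)))
      (exp (κ * cos (θ - μ)) * (κ * -sin (θ - μ))) θ :=
    ((((hasDerivAt_id θ).sub_const μ).cos).const_mul κ).exp.congr_deriv (by simp)
  have hlin : HasDerivAt (fun t : ℝ => 1 + ν * cos t) (ν * -sin θ) θ :=
    ((hasDerivAt_cos θ).const_mul ν).const_add 1
  exact (hexp.mul hlin).congr_deriv (by ring)

theorem cos_ne_neg_one_of_mem_Ioo {θ : ℝ} (hθ : θ ∈ Set.Ioo (-π) π) : cos θ ≠ -1 := by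
  have hhalf : 0 < cos (θ / 2) := cos_pos_of_mem_Ioo ⟨by linarith [hθ.1], by linarith [hθ.2]⟩
  have hdouble : cos θ = 2 * cos (θ / 2) ^ 2 - 1 := by
    rw [← cos_two_mul, mul_div_cancel₀ θ two_ne_zero]
  rw [hdouble]
  nlinarith

theorem one_add_tan_half_sq_sq_mul_eq_quartic (θ μ ν β : ℝ) (hθ : cos θ ≠ -1) :
    (1 + tan (θ / 2) ^ 2) ^ 2 * (sin (θ - μ) * (1 + ν * cos θ) + β * sin θ) =
      sin μ * (1 - ν) * tan (θ / 2) ^ 4 + (2 * β + 2 * cos μ * (1 - ν)) * tan (θ / 2) ^ 3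
        + 2 * sin μ * ν * tan (θ / 2) ^ 2 + (2 * β + 2 * cos μ * (1 + ν)) * tan (θ / 2)
        - sin μ * (1 + ν) := by
  rw [sin_sub, cos_eq_two_mul_tan_half_div_one_sub_tan_half_sq θ hθ,
    sin_eq_two_mul_tan_half_div_one_add_tan_half_sq θ]
  field_simp
  ring

theorem stmt16_general (κ ν μ : ℝ) (hκ : 0 < κ)
    (b₁ b₂ b₃ d₀ d₁ d₂ d₃ d₄ : ℝ)
    (hb₁ : b₁ = Real.cos μ) (hb₂ : b₂ = Real.sin μ) (hb₃ : b₃ = ν / κ)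
    (hd₄ : d₄ = b₂ * (1 - ν)) (hd₃ : d₃ = 2 * b₃ + 2 * b₁ * (1 - ν))
    (hd₂ : d₂ = 2 * b₂ * ν) (hd₁ : d₁ = 2 * b₃ + 2 * b₁ * (1 + ν))
    (hd₀ : d₀ = -(b₂ * (1 + ν)))
    (θ : ℝ) (hθ : θ ∈ Set.Ioo (-π) π) :
    deriv (fun t : ℝ => Real.exp (κ * Real.cos (t - μ)) * (1 + ν * Real.cos t)) θ = 0 ↔
      d₄ * Real.tan (θ / 2) ^ 4 + d₃ * Real.tan (θ / 2) ^ 3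
        + d₂ * Real.tan (θ / 2) ^ 2 + d₁ * Real.tan (θ / 2) + d₀ = 0 := by
  set G := sin (θ - μ) * (1 + ν * cos θ) + ν / κ * sin θ
  have hderiv : deriv (fun t : ℝ => exp (κ * cos (t - μ)) * (1 + ν * cos t)) θ =
      -(exp (κ * cos (θ - μ)) * κ) * G := by
    rw [(hasDerivAt_exp_mul_cos_sub_mul_one_add_mul_cos κ ν μ θ).deriv]
    simp only [G]
    field_simp
  have hquartic : d₄ * tan (θ / 2) ^ 4 + d₃ * tan (θ / 2) ^ 3 + d₂ * tan (θ / 2) ^ 2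
      + d₁ * tan (θ / 2) + d₀ = (1 + tan (θ / 2) ^ 2) ^ 2 * G := by
    rw [one_add_tan_half_sq_sq_mul_eq_quartic θ μ ν (ν / κ) (cos_ne_neg_one_of_mem_Ioo hθ)]
    subst_vars
    ring
  rw [hderiv, hquartic, mul_eq_zero_iff_left (neg_ne_zero.mpr (by positivity)),
    mul_eq_zero_iff_left (by positivity)]

theorem stmt16 (κ ν μ : ℝ) (hκ : 0 < κ) (hν : ν ∈ Set.Ioo (0:ℝ) 1)
    (b₁ b₂ b₃ d₀ d₁ d₂ d₃ d₄ : ℝ)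
    (hb₁ : b₁ = Real.cos μ) (hb₂ : b₂ = Real.sin μ) (hb₃ : b₃ = ν / κ)
    (hd₄ : d₄ = b₂ * (1 - ν)) (hd₃ : d₃ = 2 * b₃ + 2 * b₁ * (1 - ν))
    (hd₂ : d₂ = 2 * b₂ * ν) (hd₁ : d₁ = 2 * b₃ + 2 * b₁ * (1 + ν))
    (hd₀ : d₀ = -(b₂ * (1 + ν)))
    (θ : ℝ) (hθ : θ ∈ Set.Ioo (-π) π) :
    deriv (fun t : ℝ => Real.exp (κ * Real.cos (t - μ)) * (1 + ν * Real.cos t)) θ = 0 ↔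
      d₄ * Real.tan (θ / 2) ^ 4 + d₃ * Real.tan (θ / 2) ^ 3
        + d₂ * Real.tan (θ / 2) ^ 2 + d₁ * Real.tan (θ / 2) + d₀ = 0 :=
  stmt16_general κ ν μ hκ b₁ b₂ b₃ d₀ d₁ d₂ d₃ d₄ hb₁ hb₂ hb₃ hd₄ hd₃ hd₂ hd₁ hd₀ θ hθ
end

section
/- Let κ > 0 and ν ∈ (0, 1), and let h₃(θ) = e^{κ cos θ} (1 + ν cos θ) / (2π (I₀(κ) + ν I₁(κ))) for θ ∈ [0, 2π). Then the first trigonometric moment of h₃ is real: ∫₀^{2π} sin θ · h₃(θ) dθ = 0 (so the mean direction is 0), and the mean resultant length satisfies ∫₀^{2π} cos θ · h₃(θ) dθ = ( ν I₀(κ) + 2 I₁(κ) + ν I₂(κ) ) / ( 2 ( I₀(κ) + ν I₁(κ) ) ). -/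
open Real

/-- The symmetric toroidal marginal density (location parameter `μ = 0`). -/
noncomputable def h₃ (κ ν : ℝ) (θ : ℝ) : ℝ :=
  Real.exp (κ * Real.cos θ) * (1 + ν * Real.cos θ)
    / (2 * π * (besselI 0 κ + ν * besselI 1 κ))

/-!
The sine moment vanishes because `sin θ · g(cos θ)` integrates, via `u = cos θ`, to an integral
over the degenerate interval `[cos 0, cos 2π]`. For the cosine moment, `cos² θ = (1 + cos 2θ)/2`
writes `cos θ · e^{κ cos θ}(1 + ν cos θ)` as a combination of the integrands defining `I₀, I₁, I₂`.
-/

theorem integral_sin_mul_comp_cos_eq_zero {f : ℝ → ℝ} (hf : Continuous f) {a b : ℝ}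
    (hab : cos a = cos b) : ∫ θ in a..b, sin θ * f (cos θ) = 0 := by
  have hsub : ∫ θ in a..b, f (cos θ) * -sin θ = ∫ u in cos a..cos b, f u :=
    intervalIntegral.integral_comp_mul_deriv (fun θ _ => hasDerivAt_cos θ)
      (by fun_prop) hf
  rw [hab, intervalIntegral.integral_same] at hsub
  simpa only [mul_neg, intervalIntegral.integral_neg, neg_eq_zero, mul_comm] using hsub

theorem integral_exp_mul_cos_mul_cos_eq_besselI (p : ℤ) (κ : ℝ) :
    ∫ θ in (0:ℝ)..(2 * π), exp (κ * cos θ) * cos (p * θ) = 2 * π * besselI p κ := by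
  rw [besselI]
  field_simp

theorem integral_cos_mul_exp_mul_one_add_mul_cos (κ ν : ℝ) :
    ∫ θ in (0:ℝ)..(2 * π), cos θ * (exp (κ * cos θ) * (1 + ν * cos θ))
      = π * (ν * besselI 0 κ + 2 * besselI 1 κ + ν * besselI 2 κ) := by
  have hsplit : ∀ θ, cos θ * (exp (κ * cos θ) * (1 + ν * cos θ))
      = ν / 2 * (exp (κ * cos θ) * cos (((0:ℤ):ℝ) * θ))
        + exp (κ * cos θ) * cos (((1:ℤ):ℝ) * θ)
        + ν / 2 * (exp (κ * cos θ) * cos (((2:ℤ):ℝ) * θ)) := by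
    intro θ
    push_cast
    rw [zero_mul, cos_zero, one_mul, cos_two_mul]
    ring
  have hint : ∀ p : ℤ, IntervalIntegrable (fun θ => exp (κ * cos θ) * cos (p * θ))
      MeasureTheory.volume 0 (2 * π) :=
    fun p => (by fun_prop : Continuous _).intervalIntegrable _ _
  simp only [hsplit]
  rw [intervalIntegral.integral_add ((hint 0).const_mul _ |>.add (hint 1)) ((hint 2).const_mul _),
    intervalIntegral.integral_add ((hint 0).const_mul _) (hint 1),
    intervalIntegral.integral_const_mul, intervalIntegral.integral_const_mul]
  simp only [integral_exp_mul_cos_mul_cos_eq_besselI]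
  ring

theorem stmt18_general (κ ν : ℝ) :
    (∫ θ in (0:ℝ)..(2 * π), Real.sin θ * h₃ κ ν θ) = 0 ∧
    (∫ θ in (0:ℝ)..(2 * π), Real.cos θ * h₃ κ ν θ)
      = (ν * besselI 0 κ + 2 * besselI 1 κ + ν * besselI 2 κ)
          / (2 * (besselI 0 κ + ν * besselI 1 κ)) := by
  constructor
  · exact integral_sin_mul_comp_cos_eq_zero
      (f := fun u => exp (κ * u) * (1 + ν * u) / (2 * π * (besselI 0 κ + ν * besselI 1 κ)))
      (by fun_prop) (by simp)
  · simp only [h₃, mul_div_assoc', intervalIntegral.integral_div,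
      integral_cos_mul_exp_mul_one_add_mul_cos]
    rw [mul_assoc 2 π, mul_left_comm 2 π, mul_div_mul_left _ _ pi_ne_zero]

theorem stmt18 (κ ν : ℝ) (hκ : 0 < κ) (hν : ν ∈ Set.Ioo (0:ℝ) 1) :
    (∫ θ in (0:ℝ)..(2 * π), Real.sin θ * h₃ κ ν θ) = 0 ∧
    (∫ θ in (0:ℝ)..(2 * π), Real.cos θ * h₃ κ ν θ)
      = (ν * besselI 0 κ + 2 * besselI 1 κ + ν * besselI 2 κ)
          / (2 * (besselI 0 κ + ν * besselI 1 κ)) :=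
  stmt18_general κ ν
end

section
/- Let κ > 0 and ν ∈ (0, 1). Let f_c(θ) = (1 + ν cos θ)/(2π) be the cardioid density and h₃(θ) = e^{κ cos θ} (1 + ν cos θ) / (2π (I₀(κ) + ν I₁(κ))) the symmetric toroidal marginal density. Then the Kullback–Leibler divergence satisfies ∫₀^{2π} f_c(θ) · log( f_c(θ) / h₃(θ) ) dθ = log( I₀(κ) + ν I₁(κ) ) − (ν κ)/2. -/
open Real

theorem stmt19 (κ ν : ℝ) (hκ : 0 < κ) (hν : ν ∈ Set.Ioo (0:ℝ) 1) :
    (∫ θ in (0:ℝ)..(2 * π), cardioid ν θ * Real.log (cardioid ν θ / h₃ κ ν θ))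
      = Real.log (besselI 0 κ + ν * besselI 1 κ) - ν * κ / 2 := by
  obtain ⟨hν0, hν1⟩ := hν
  have hπ : (0:ℝ) < π := Real.pi_pos
  have h2π : (2:ℝ) * π ≠ 0 := by positivity
  set C := besselI 0 κ + ν * besselI 1 κ with hCdef
  have hpos : ∀ θ : ℝ, 0 < 1 + ν * Real.cos θ := by
    intro θ
    nlinarith [Real.neg_one_le_cos θ, Real.cos_le_one θ]
  -- C as a single integral
  have hint1 : IntervalIntegrable (fun θ => Real.exp (κ * Real.cos θ) * Real.cos (((0:ℤ)) * θ)) MeasureTheory.volume 0 (2*π) := by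
    apply Continuous.intervalIntegrable; continuity
  have hint2 : IntervalIntegrable (fun θ => ν * (Real.exp (κ * Real.cos θ) * Real.cos (((1:ℤ)) * θ))) MeasureTheory.volume 0 (2*π) := by
    apply Continuous.intervalIntegrable; continuity
  have hC : C = (1/(2*π)) * ∫ θ in (0:ℝ)..(2*π), Real.exp (κ * Real.cos θ) * (1 + ν * Real.cos θ) := by
    have h1 : (∫ θ in (0:ℝ)..(2*π), Real.exp (κ * Real.cos θ) * (1 + ν * Real.cos θ))
        = (∫ θ in (0:ℝ)..(2*π), Real.exp (κ * Real.cos θ) * Real.cos (((0:ℤ)) * θ))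
          + ∫ θ in (0:ℝ)..(2*π), ν * (Real.exp (κ * Real.cos θ) * Real.cos (((1:ℤ)) * θ)) := by
      rw [← intervalIntegral.integral_add hint1 hint2]
      apply intervalIntegral.integral_congr
      intro θ _
      push_cast
      simp
      ring
    rw [h1, intervalIntegral.integral_const_mul]
    simp only [hCdef, besselI]
    ring
  have hCpos : 0 < C := by
    rw [hC]
    have : 0 < ∫ θ in (0:ℝ)..(2*π), Real.exp (κ * Real.cos θ) * (1 + ν * Real.cos θ) := by
      apply intervalIntegral.intervalIntegral_pos_of_pos_on
      · apply Continuous.intervalIntegrable; continuity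
      · intro x _
        exact mul_pos (Real.exp_pos _) (hpos x)
      · positivity
    positivity
  -- pointwise rewriting of the integrand
  have key : Set.EqOn (fun θ => cardioid ν θ * Real.log (cardioid ν θ / h₃ κ ν θ))
      (fun θ => Real.log C / (2*π) + ((ν * Real.log C - κ)/(2*π)) * Real.cos θ
        + (-(ν*κ)/(2*π)) * Real.cos θ ^ 2) (Set.uIcc 0 (2*π)) := by
    intro θ _
    have hp := hpos θ
    have hratio : cardioid ν θ / h₃ κ ν θ = C * Real.exp (-(κ * Real.cos θ)) := by
      simp only [cardioid, h₃, ← hCdef]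
      rw [Real.exp_neg]
      have he := (Real.exp_pos (κ * Real.cos θ)).ne'
      field_simp
    simp only [hratio]
    rw [Real.log_mul hCpos.ne' (Real.exp_pos _).ne', Real.log_exp]
    simp only [cardioid]
    field_simp
    ring
  rw [intervalIntegral.integral_congr key]
  have i1 : IntervalIntegrable (fun _ : ℝ => Real.log C / (2*π)) MeasureTheory.volume 0 (2*π) :=
    intervalIntegrable_const
  have i2 : IntervalIntegrable (fun θ : ℝ => ((ν * Real.log C - κ)/(2*π)) * Real.cos θ) MeasureTheory.volume 0 (2*π) := by
    apply Continuous.intervalIntegrable; continuity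
  have i3 : IntervalIntegrable (fun θ : ℝ => (-(ν*κ)/(2*π)) * Real.cos θ ^ 2) MeasureTheory.volume 0 (2*π) := by
    apply Continuous.intervalIntegrable; continuity
  rw [intervalIntegral.integral_add (i1.add i2) i3, intervalIntegral.integral_add i1 i2,
    intervalIntegral.integral_const, intervalIntegral.integral_const_mul,
    intervalIntegral.integral_const_mul, integral_cos, integral_cos_sq]
  simp [Real.sin_two_pi]
  field_simp
  ring
end
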